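/- arXiv:1710.00896 — 2 statements merged into one kernel-verified Lean document; each statement's English description precedes it below -/
import Mathlib

section
/- Let Φ be the heat kernel on ℝⁿ×ℝ. Suppose α ∈ (0, n+2) and β ∈ [0, n+2) are constants. Then there exists C = C(n,α,β) > 0 such that for all x, z ∈ ℝⁿ and t > 0, ∬_{ℝⁿ×(0,t)} Φ(x−y, t−s)^{α/n} Φ(y−z, s)^{β/n} dy ds ≤ C / (√t)^{α+β−(n+2)}. -/
open Real MeasureTheory Set Metric

noncomputable def heatKernel (n : ℕ) (x : EuclideanSpace ℝ (Fin n)) (t : ℝ) : ℝ :=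
  if 0 < t then (4 * Real.pi * t) ^ (-(n : ℝ) / 2) * Real.exp (-‖x‖ ^ 2 / (4 * t)) else 0

/-!
For `τ, σ > 0`, `Φ(·, τ) ^ (α / n)` is `(4πτ) ^ (-α / 2)` times a Gaussian of variance `∼ τ`.
Bounding one Gaussian factor of the `y`-integrand by `1` and integrating the other gives
`∫ Φ(x - y, τ) ^ (α / n) Φ(y - z, σ) ^ (β / n) dy ≲ τ ^ ((n - α) / 2) σ ^ (-β / 2)` and, when
`β > 0`, also `≲ τ ^ (-α / 2) σ ^ ((n - β) / 2)`. With `τ = t - s`, `σ = s`, use the second bound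
for `s ≤ t / 2` and the first for `s > t / 2`: the negative power then sees a variable `≥ t / 2`
and is `≲ t ^ (-α / 2)`, resp. `t ^ (-β / 2)`, while the remaining power has exponent `> -1`
since `α, β < n + 2`. Integrating in `s` gives `≲ t ^ ((n + 2 - α - β) / 2)`.
-/

section Gaussian

variable {V : Type*} [NormedAddCommGroup V] [InnerProductSpace ℝ V] [FiniteDimensional ℝ V]
  [MeasurableSpace V] [BorelSpace V]

theorem integral_exp_neg_mul_sq_norm_sub {b : ℝ} (hb : 0 < b) (x : V) :
    ∫ y : V, rexp (-b * ‖y - x‖ ^ 2) = (π / b) ^ (Module.finrank ℝ V / 2 : ℝ) :=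
  (integral_sub_right_eq_self (fun y => rexp (-b * ‖y‖ ^ 2)) x).trans
    (GaussianFourier.integral_rexp_neg_mul_sq_norm hb)

theorem integral_exp_neg_mul_sq_norm_sub_mul_le {a b : ℝ} (ha : 0 < a) (hb : 0 ≤ b) (x z : V) :
    ∫ y : V, rexp (-a * ‖x - y‖ ^ 2) * rexp (-b * ‖y - z‖ ^ 2) ≤
      (π / a) ^ (Module.finrank ℝ V / 2 : ℝ) := by
  rw [← integral_exp_neg_mul_sq_norm_sub ha x]
  refine integral_mono_of_nonneg (.of_forall fun y => by positivity)
    (.of_integral_ne_zero ?_) (.of_forall fun y => ?_)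
  · rw [integral_exp_neg_mul_sq_norm_sub ha x]
    positivity
  · have : rexp (-b * ‖y - z‖ ^ 2) ≤ 1 := exp_le_one_iff.2 (by nlinarith [sq_nonneg ‖y - z‖])
    simpa [norm_sub_rev x y] using mul_le_of_le_one_right (exp_pos _).le this

end Gaussian

theorem integrableOn_rpow_Ioo {p t : ℝ} (hp : -1 < p) (ht : 0 ≤ t) :
    IntegrableOn (fun s : ℝ => s ^ p) (Ioo 0 t) :=
  ((intervalIntegrable_iff_integrableOn_Ioc_of_le ht).1
    (intervalIntegral.intervalIntegrable_rpow' hp)).mono_set Ioo_subset_Ioc_self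

theorem integrableOn_sub_rpow_Ioo {r t : ℝ} (hr : -1 < r) (ht : 0 ≤ t) :
    IntegrableOn (fun s : ℝ => (t - s) ^ r) (Ioo 0 t) := by
  have := (intervalIntegral.intervalIntegrable_rpow' hr (a := 0) (b := t)).comp_sub_left t
  rw [sub_self, sub_zero] at this
  exact ((intervalIntegrable_iff_integrableOn_Ioc_of_le ht).1 this.symm).mono_set
    Ioo_subset_Ioc_self

theorem integral_rpow_Ioo {p t : ℝ} (hp : -1 < p) (ht : 0 ≤ t) :
    ∫ s in Ioo 0 t, s ^ p = t ^ (p + 1) / (p + 1) := by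
  rw [← integral_Ioc_eq_integral_Ioo, ← intervalIntegral.integral_of_le ht,
    integral_rpow (.inl hp), zero_rpow (by linarith), sub_zero]

theorem integral_sub_rpow_Ioo {r t : ℝ} (hr : -1 < r) (ht : 0 ≤ t) :
    ∫ s in Ioo 0 t, (t - s) ^ r = t ^ (r + 1) / (r + 1) := by
  rw [← integral_Ioc_eq_integral_Ioo, ← intervalIntegral.integral_of_le ht,
    intervalIntegral.integral_comp_sub_left (fun s => s ^ r), sub_self, sub_zero,
    integral_rpow (.inl hr), zero_rpow (by linarith), sub_zero]

theorem setIntegral_Ioo_le_of_le_rpow_add_sub_rpow {F : ℝ → ℝ} {t p r A B : ℝ} (ht : 0 ≤ t)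
    (hp : -1 < p) (hr : -1 < r) (hF₀ : ∀ s ∈ Ioo 0 t, 0 ≤ F s)
    (hF : ∀ s ∈ Ioo 0 t, F s ≤ A * s ^ p + B * (t - s) ^ r) :
    ∫ s in Ioo 0 t, F s ≤ A * (t ^ (p + 1) / (p + 1)) + B * (t ^ (r + 1) / (r + 1)) := by
  have hp_int := (integrableOn_rpow_Ioo hp ht).const_mul A
  have hr_int := (integrableOn_sub_rpow_Ioo hr ht).const_mul B
  calc ∫ s in Ioo 0 t, F s ≤ ∫ s in Ioo 0 t, (A * s ^ p + B * (t - s) ^ r) :=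
        integral_mono_of_nonneg ((ae_restrict_mem measurableSet_Ioo).mono hF₀)
          (hp_int.add hr_int) ((ae_restrict_mem measurableSet_Ioo).mono hF)
    _ = _ := by
      rw [integral_add hp_int hr_int, integral_const_mul, integral_const_mul,
        integral_rpow_Ioo hp ht, integral_sub_rpow_Ioo hr ht]

theorem rpow_neg_div_two_le_of_half_le {a t τ : ℝ} (ha : 0 ≤ a) (ht : 0 < t) (hτ : t / 2 ≤ τ) :
    τ ^ (-a / 2) ≤ 2 ^ (a / 2) * t ^ (-a / 2) := by
  calc τ ^ (-a / 2) ≤ (t / 2) ^ (-a / 2) :=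
        rpow_le_rpow_of_nonpos (by positivity) hτ (by linarith)
    _ = 2 ^ (a / 2) * t ^ (-a / 2) := by
      rw [div_rpow ht.le zero_le_two, div_eq_mul_inv, ← rpow_neg zero_le_two, mul_comm]
      ring_nf

namespace heatKernel

variable {n : ℕ}

theorem nonneg (x : EuclideanSpace ℝ (Fin n)) (t : ℝ) : 0 ≤ heatKernel n x t := by
  unfold heatKernel
  split_ifs <;> positivity

theorem sub_comm (x y : EuclideanSpace ℝ (Fin n)) (t : ℝ) :
    heatKernel n (x - y) t = heatKernel n (y - x) t := by
  simp only [heatKernel, norm_sub_rev x y]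

theorem rpow_div_eq (hn : n ≠ 0) (γ : ℝ) {τ : ℝ} (hτ : 0 < τ) (w : EuclideanSpace ℝ (Fin n)) :
    heatKernel n w τ ^ (γ / n) = (4 * π * τ) ^ (-γ / 2) * rexp (-(γ / (4 * n * τ)) * ‖w‖ ^ 2) := by
  have h4 : 0 < 4 * π * τ := by positivity
  rw [heatKernel, if_pos hτ, mul_rpow (rpow_nonneg h4.le _) (exp_pos _).le, ← rpow_mul h4.le,
    ← exp_mul]
  congr 2 <;> field_simp

theorem exists_integral_rpow_mul_rpow_le (hn : n ≠ 0) {α β : ℝ} (hα : 0 < α) (hβ : 0 ≤ β) :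
    ∃ K > 0, ∀ (x z : EuclideanSpace ℝ (Fin n)) (τ σ : ℝ), 0 < τ → 0 < σ →
      ∫ y, heatKernel n (x - y) τ ^ (α / n) * heatKernel n (y - z) σ ^ (β / n) ≤
        K * τ ^ (((n : ℝ) - α) / 2) * σ ^ (-β / 2) := by
  have hn' : (0 : ℝ) < n := by positivity
  refine ⟨(4 * π) ^ (-(α + β) / 2) * (4 * π * n / α) ^ ((n : ℝ) / 2), by positivity,
    fun x z τ σ hτ hσ => ?_⟩
  simp_rw [rpow_div_eq hn _ hτ, rpow_div_eq hn _ hσ, mul_mul_mul_comm _ (rexp _),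
    integral_const_mul]
  have hgauss := integral_exp_neg_mul_sq_norm_sub_mul_le (V := EuclideanSpace ℝ (Fin n))
    (a := α / (4 * n * τ)) (b := β / (4 * n * σ)) (by positivity) (by positivity) x z
  rw [finrank_euclideanSpace_fin] at hgauss
  refine (mul_le_mul_of_nonneg_left hgauss (by positivity)).trans_eq ?_
  rw [show π / (α / (4 * n * τ)) = 4 * π * n / α * τ by field_simp, mul_rpow (by positivity)
    hτ.le, mul_rpow (by positivity) hτ.le, mul_rpow (by positivity) hσ.le,
    show ((n : ℝ) - α) / 2 = -α / 2 + n / 2 by ring, rpow_add hτ,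
    show -(α + β) / 2 = -α / 2 + -β / 2 by ring, rpow_add (by positivity)]
  ring

theorem exists_integral_rpow_mul_rpow_le' (hn : n ≠ 0) {α β : ℝ} (hα : 0 ≤ α) (hβ : 0 < β) :
    ∃ K > 0, ∀ (x z : EuclideanSpace ℝ (Fin n)) (τ σ : ℝ), 0 < τ → 0 < σ →
      ∫ y, heatKernel n (x - y) τ ^ (α / n) * heatKernel n (y - z) σ ^ (β / n) ≤
        K * τ ^ (-α / 2) * σ ^ (((n : ℝ) - β) / 2) := by
  obtain ⟨K, hK, hbound⟩ := exists_integral_rpow_mul_rpow_le hn hβ hα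
  refine ⟨K, hK, fun x z τ σ hτ hσ => ?_⟩
  calc ∫ y, heatKernel n (x - y) τ ^ (α / n) * heatKernel n (y - z) σ ^ (β / n)
      = ∫ y, heatKernel n (z - y) σ ^ (β / n) * heatKernel n (y - x) τ ^ (α / n) := by
        simp only [sub_comm x, sub_comm _ z, mul_comm]
    _ ≤ K * σ ^ (((n : ℝ) - β) / 2) * τ ^ (-α / 2) := hbound z x σ τ hσ hτ
    _ = K * τ ^ (-α / 2) * σ ^ (((n : ℝ) - β) / 2) := mul_right_comm _ _ _

theorem exists_integral_rpow_mul_rpow_le_add (hn : n ≠ 0) {α β : ℝ} (hα : 0 < α) (hβ : 0 ≤ β) :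
    ∃ K₁ ≥ 0, ∃ K₂ > 0, ∀ (x z : EuclideanSpace ℝ (Fin n)) (t s : ℝ), s ∈ Ioo 0 t →
      ∫ y, heatKernel n (x - y) (t - s) ^ (α / n) * heatKernel n (y - z) s ^ (β / n) ≤
        K₁ * t ^ (-α / 2) * s ^ (((n : ℝ) - β) / 2) +
          K₂ * t ^ (-β / 2) * (t - s) ^ (((n : ℝ) - α) / 2) := by
  obtain ⟨K₂, hK₂, hbound₂⟩ := exists_integral_rpow_mul_rpow_le hn hα hβ
  rcases hβ.eq_or_lt with rfl | hβ
  · refine ⟨0, le_rfl, K₂, hK₂, fun x z t s hs => ?_⟩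
    simpa [mul_right_comm K₂] using hbound₂ x z (t - s) s (sub_pos.2 hs.2) hs.1
  obtain ⟨K₁, hK₁, hbound₁⟩ := exists_integral_rpow_mul_rpow_le' hn hα.le hβ
  refine ⟨K₁ * 2 ^ (α / 2), by positivity, K₂ * 2 ^ (β / 2), by positivity,
    fun x z t s ⟨hs, hst⟩ => ?_⟩
  have ht : 0 < t := hs.trans hst
  rcases le_or_gt s (t / 2) with hs₂ | hs₂
  · calc _ ≤ K₁ * (t - s) ^ (-α / 2) * s ^ (((n : ℝ) - β) / 2) :=
          hbound₁ x z (t - s) s (by linarith) hs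
      _ ≤ K₁ * (2 ^ (α / 2) * t ^ (-α / 2)) * s ^ (((n : ℝ) - β) / 2) := by
          gcongr
          exact rpow_neg_div_two_le_of_half_le hα.le ht (by linarith)
      _ = K₁ * 2 ^ (α / 2) * t ^ (-α / 2) * s ^ (((n : ℝ) - β) / 2) := by ring
      _ ≤ _ := le_add_of_nonneg_right (by positivity)
  · calc _ ≤ K₂ * (t - s) ^ (((n : ℝ) - α) / 2) * s ^ (-β / 2) :=
          hbound₂ x z (t - s) s (by linarith) hs
      _ ≤ K₂ * (t - s) ^ (((n : ℝ) - α) / 2) * (2 ^ (β / 2) * t ^ (-β / 2)) := by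
          gcongr
          exact rpow_neg_div_two_le_of_half_le hβ.le ht hs₂.le
      _ = K₂ * 2 ^ (β / 2) * t ^ (-β / 2) * (t - s) ^ (((n : ℝ) - α) / 2) := by ring
      _ ≤ _ := le_add_of_nonneg_left (by positivity)

theorem exists_setIntegral_integral_rpow_mul_rpow_le (hn : n ≠ 0) {α β : ℝ}
    (hα : α ∈ Ioo 0 ((n : ℝ) + 2)) (hβ : β ∈ Ico 0 ((n : ℝ) + 2)) :
    ∃ M > 0, ∀ (x z : EuclideanSpace ℝ (Fin n)) (t : ℝ), 0 < t →
      ∫ s in Ioo 0 t, ∫ y, heatKernel n (x - y) (t - s) ^ (α / n) *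
          heatKernel n (y - z) s ^ (β / n) ≤ M * t ^ (((n : ℝ) + 2 - α - β) / 2) := by
  obtain ⟨K₁, hK₁, K₂, hK₂, hbound⟩ := exists_integral_rpow_mul_rpow_le_add hn hα.1 hβ.1
  have hp₁ : -1 < ((n : ℝ) - β) / 2 := by linarith [hβ.2]
  have hp₂ : -1 < ((n : ℝ) - α) / 2 := by linarith [hα.2]
  refine ⟨K₁ / (((n : ℝ) - β) / 2 + 1) + K₂ / (((n : ℝ) - α) / 2 + 1),
    add_pos_of_nonneg_of_pos (div_nonneg hK₁ (by linarith)) (div_pos hK₂ (by linarith)),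
    fun x z t ht => ?_⟩
  have e₁ : t ^ (-α / 2) * t ^ (((n : ℝ) - β) / 2 + 1) = t ^ (((n : ℝ) + 2 - α - β) / 2) := by
    rw [← rpow_add ht]
    ring_nf
  have e₂ : t ^ (-β / 2) * t ^ (((n : ℝ) - α) / 2 + 1) = t ^ (((n : ℝ) + 2 - α - β) / 2) := by
    rw [← rpow_add ht]
    ring_nf
  refine (setIntegral_Ioo_le_of_le_rpow_add_sub_rpow (A := K₁ * t ^ (-α / 2))
    (B := K₂ * t ^ (-β / 2)) ht.le hp₁ hp₂
    (fun s _ => integral_nonneg fun y => mul_nonneg (rpow_nonneg (nonneg _ _) _)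
      (rpow_nonneg (nonneg _ _) _))
    (hbound x z t)).trans_eq ?_
  linear_combination K₁ / (((n : ℝ) - β) / 2 + 1) * e₁ + K₂ / (((n : ℝ) - α) / 2 + 1) * e₂

end heatKernel

theorem heatKernel_pow_composition (n : ℕ) (hn : 1 ≤ n) (α β : ℝ)
    (hα : α ∈ Set.Ioo 0 ((n : ℝ) + 2)) (hβ : β ∈ Set.Ico 0 ((n : ℝ) + 2)) :
    ∃ C > 0, ∀ (x z : EuclideanSpace ℝ (Fin n)) (t : ℝ), 0 < t →
      (∫ s in Set.Ioo (0 : ℝ) t, ∫ y : EuclideanSpace ℝ (Fin n),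
          heatKernel n (x - y) (t - s) ^ (α / (n : ℝ)) *
            heatKernel n (y - z) s ^ (β / (n : ℝ))) ≤
        C / Real.sqrt t ^ (α + β - ((n : ℝ) + 2)) := by
  obtain ⟨C, hC, hbound⟩ :=
    heatKernel.exists_setIntegral_integral_rpow_mul_rpow_le (by omega) hα hβ
  refine ⟨C, hC, fun x z t ht => (hbound x z t ht).trans_eq ?_⟩
  rw [sqrt_eq_rpow, ← rpow_mul ht.le, div_eq_mul_inv C, ← rpow_neg ht.le]
  ring_nf
end

section
/- Let Φ be the heat kernel on ℝⁿ×ℝ and let α > 0 and T be constants. Then there exists C = C(n,α) > 0 such that for all s < t ≤ T and all x ∈ ℝⁿ with |x| ≤ √(T−t), one has ∫_{|y|<√(T−s)} Φ(x−y, t−s)^{α/n} dy ≥ C / (t−s)^{(α−n)/2}. -/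
/-!
Put τ = t - s. The ball of radius √(T - s) about the origin contains a ball of radius
√τ / 2 whose points all lie within √τ of x: shrink x towards the origin by the factor
1 - √τ / (2√(T - s)). On that small ball the exponent of Φ(x - y, τ)^{α/n} is at least
-α/(4n), so the integrand is at least e^{-α/(4n)} (4πτ)^{-α/2}, while the small ball has
volume comparable to τ^{n/2}; the product is a constant times τ^{(n-α)/2}.
-/

open Real MeasureTheory Set Metric

theorem exists_ball_subset_ball_inter_ball {E : Type*} [NormedAddCommGroup E] [NormedSpace ℝ E]
    {x : E} {r R : ℝ} (hx : ‖x‖ ≤ R) (hr : 0 < r) (hrR : r ≤ R) :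
    ∃ y : E, ball y (r / 2) ⊆ ball 0 R ∩ ball x r := by
  have hR : 0 < R := hr.trans_le hrR
  set k := r / (2 * R)
  have hk₀ : 0 ≤ k := by positivity
  have hk₁ : k ≤ 1 := div_le_one_of_le₀ (by linarith) (by positivity)
  have hkR : k * R = r / 2 := by simp only [k]; field_simp
  have hy₀ : ‖x - k • x‖ ≤ R - r / 2 := by
    rw [show x - k • x = (1 - k) • x by rw [sub_smul, one_smul], norm_smul,
      Real.norm_of_nonneg (by linarith)]
    nlinarith [norm_nonneg x]
  have hyx : dist (x - k • x) x ≤ r / 2 := by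
    rw [dist_self_sub_left, norm_smul, Real.norm_of_nonneg hk₀, ← hkR]
    gcongr
  refine ⟨x - k • x, fun z hz => ⟨?_, ?_⟩⟩
  · rw [mem_ball_zero_iff]
    linarith [norm_le_norm_add_norm_sub' z (x - k • x), dist_eq_norm z (x - k • x),
      mem_ball.mp hz]
  · rw [mem_ball]
    linarith [dist_triangle z (x - k • x) x, mem_ball.mp hz]

theorem mul_volume_ball_le_setIntegral_ball {E : Type*} [NormedAddCommGroup E]
    [NormedSpace ℝ E] [MeasurableSpace E] [BorelSpace E] [FiniteDimensional ℝ E]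
    (μ : Measure E) [μ.IsAddHaarMeasure] {f : E → ℝ} (hf : Continuous f) (hf₀ : 0 ≤ f)
    {y : E} {ρ R κ : ℝ} (hρ : 0 < ρ) (hsub : ball y ρ ⊆ ball 0 R)
    (hκ : ∀ z ∈ ball y ρ, κ ≤ f z) :
    κ * (ρ ^ Module.finrank ℝ E * μ.real (ball 0 1)) ≤ ∫ z in ball 0 R, f z ∂μ := by
  have hint : IntegrableOn f (ball 0 R) μ :=
    (hf.continuousOn.integrableOn_compact (isCompact_closedBall 0 R)).mono_set
      ball_subset_closedBall
  calc κ * (ρ ^ Module.finrank ℝ E * μ.real (ball 0 1)) = κ * μ.real (ball y ρ) := by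
        simp only [measureReal_def]
        rw [Measure.addHaar_ball_of_pos μ y hρ, ENNReal.toReal_mul,
          ENNReal.toReal_ofReal (by positivity)]
    _ ≤ ∫ z in ball y ρ, f z ∂μ :=
        setIntegral_ge_of_const_le_real measurableSet_ball measure_ball_lt_top.ne hκ
          (hint.mono_set hsub)
    _ ≤ ∫ z in ball 0 R, f z ∂μ :=
        setIntegral_mono_set hint (ae_of_all _ hf₀) hsub.eventuallyLE

theorem heatKernel_nonneg (n : ℕ) (x : EuclideanSpace ℝ (Fin n)) (t : ℝ) :
    0 ≤ heatKernel n x t := by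
  unfold heatKernel; split_ifs <;> positivity

theorem continuous_heatKernel (n : ℕ) (t : ℝ) : Continuous fun x => heatKernel n x t := by
  unfold heatKernel
  split_ifs
  · fun_prop
  · exact continuous_const

theorem heatKernel_rpow_eq {n : ℕ} (hn : n ≠ 0) (α : ℝ) {t : ℝ} (ht : 0 < t)
    (x : EuclideanSpace ℝ (Fin n)) :
    heatKernel n x t ^ (α / n) =
      (4 * π * t) ^ (-α / 2) * exp (-(α * ‖x‖ ^ 2) / (4 * n * t)) := by
  have h4πt : 0 < 4 * π * t := by positivity
  rw [heatKernel, if_pos ht, mul_rpow (rpow_nonneg h4πt.le _) (exp_pos _).le,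
    ← rpow_mul h4πt.le, ← exp_mul]
  congr 2 <;> field_simp

theorem le_heatKernel_rpow {n : ℕ} (hn : n ≠ 0) {α : ℝ} (hα : 0 ≤ α) {t : ℝ}
    (ht : 0 < t) {x : EuclideanSpace ℝ (Fin n)} (hx : ‖x‖ ≤ √t) :
    (4 * π * t) ^ (-α / 2) * exp (-α / (4 * n)) ≤ heatKernel n x t ^ (α / n) := by
  rw [heatKernel_rpow_eq hn α ht]
  gcongr (4 * π * t) ^ (-α / 2) * exp ?_
  have hn₀ : (0 : ℝ) < n := by positivity
  have hx2 : ‖x‖ ^ 2 ≤ t := by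
    calc ‖x‖ ^ 2 ≤ √t ^ 2 := by gcongr
      _ = t := sq_sqrt ht.le
  rw [neg_div, neg_div, neg_le_neg_iff, div_le_div_iff₀ (by positivity) (by positivity)]
  calc α * ‖x‖ ^ 2 * (4 * n) ≤ α * t * (4 * n) := by gcongr
    _ = α * (4 * n * t) := by ring

theorem rpow_neg_half_mul_sqrt_div_two_pow {τ : ℝ} (hτ : 0 < τ) (α : ℝ) (n : ℕ) :
    (4 * π * τ) ^ (-α / 2) * (√τ / 2) ^ n =
      (4 * π) ^ (-α / 2) / 2 ^ n / τ ^ ((α - n) / 2) := by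
  have hsqrt : √τ ^ n = τ ^ ((n : ℝ) / 2) := by
    rw [sqrt_eq_rpow, ← rpow_natCast, ← rpow_mul hτ.le]; ring_nf
  have hτpow : τ ^ ((α - n) / 2) * τ ^ (-α / 2) * τ ^ ((n : ℝ) / 2) = 1 := by
    rw [← rpow_add hτ, ← rpow_add hτ]; ring_nf; exact rpow_zero τ
  rw [mul_rpow (by positivity) hτ.le, div_pow, hsqrt, eq_div_iff (by positivity)]
  linear_combination (4 * π) ^ (-α / 2) / 2 ^ n * hτpow

theorem heatKernel_pow_ball_lower_bound (n : ℕ) (hn : 1 ≤ n) (α : ℝ) (hα : 0 < α) :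
    ∃ C > 0, ∀ (T s t : ℝ) (x : EuclideanSpace ℝ (Fin n)),
      s < t → t ≤ T → ‖x‖ ≤ Real.sqrt (T - t) →
      C / (t - s) ^ ((α - n) / 2) ≤
        ∫ y in Metric.ball (0 : EuclideanSpace ℝ (Fin n)) (Real.sqrt (T - s)),
          heatKernel n (x - y) (t - s) ^ (α / (n : ℝ)) := by
  set v := volume.real (ball (0 : EuclideanSpace ℝ (Fin n)) 1)
  have hv : 0 < v := ENNReal.toReal_pos (measure_ball_pos _ _ one_pos).ne' measure_ball_lt_top.ne
  refine ⟨(4 * π) ^ (-α / 2) / 2 ^ n * exp (-α / (4 * n)) * v, by positivity, ?_⟩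
  intro T s t x hst htT hx
  have hτ : 0 < t - s := sub_pos.mpr hst
  have hxR : ‖x‖ ≤ √(T - s) := hx.trans (sqrt_le_sqrt (by linarith))
  have hrR : √(t - s) ≤ √(T - s) := sqrt_le_sqrt (by linarith)
  obtain ⟨y₀, hy₀⟩ := exists_ball_subset_ball_inter_ball hxR (sqrt_pos.mpr hτ) hrR
  have hcont : Continuous fun y => heatKernel n (x - y) (t - s) ^ (α / n) :=
    ((continuous_heatKernel n (t - s)).comp (continuous_const.sub continuous_id)).rpow_const
      fun _ => Or.inr (by positivity)
  have hlower : ∀ y ∈ ball y₀ (√(t - s) / 2),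
      (4 * π * (t - s)) ^ (-α / 2) * exp (-α / (4 * n)) ≤
        heatKernel n (x - y) (t - s) ^ (α / n) :=
    fun y hy => le_heatKernel_rpow (by omega) hα.le hτ
      (by rw [← dist_eq_norm, dist_comm]; exact (mem_ball.mp (hy₀ hy).2).le)
  have hbound := mul_volume_ball_le_setIntegral_ball volume hcont
    (fun y => rpow_nonneg (heatKernel_nonneg n _ _) _) (by positivity)
    (hy₀.trans inter_subset_left) hlower
  rw [finrank_euclideanSpace_fin] at hbound
  refine le_of_eq_of_le ?_ hbound
  linear_combination exp (-α / (4 * n)) * v * (rpow_neg_half_mul_sqrt_div_two_pow hτ α n).symm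
end
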